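/- The unique positive equilibrium ū of the kinetic system u₁' = au₁(1-u₁)-u₁u₃, u₂' = bu₂(1-u₂)-u₂u₃, u₃' = -cu₃²+(du₁+eu₂)u₃ is Lyapunov stable (indeed asymptotically stable) on the open positive octant, under the condition abc > max{e(b-a), d(a-b)}. -/

import Mathlib

/-!
With `φ_β(s) = s - β - β log (s / β)`, the function `V = d φ_{ū₁}(u₁) + e φ_{ū₂}(u₂) + φ_{ū₃}(u₃)`
satisfies `V' = -(a d (u₁ - ū₁)² + b e (u₂ - ū₂)² + c (u₃ - ū₃)²)` along solutions: the weights
`d, e, 1` make the predator–prey cross terms cancel. The condition `abc > max {e(b-a), d(a-b)}`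
is exactly the positivity of `ū`. Since `(√s - √β)² ≤ φ_β(s) ≤ (s - β)² / s`, the sublevel sets
of `V` shrink to `ū`, which gives stability; near `ū` the upper bound also gives `V' ≤ -κ V`,
so `V` decays exponentially, which gives attraction.
-/

open Real Filter Topology Set

noncomputable def volterra (β s : ℝ) : ℝ := s - β - β * log (s / β)

section Volterra

variable {β s : ℝ}

lemma volterra_self : volterra β β = 0 := by
  rcases eq_or_ne β 0 with rfl | hβ
  · simp [volterra]
  · simp [volterra, hβ]

lemma sq_sqrt_sub_sqrt_le_volterra (hβ : 0 < β) (hs : 0 < s) :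
    (√s - √β) ^ 2 ≤ volterra β s := by
  have hβ' := sqrt_pos.2 hβ
  have hlog : β * log (s / β) ≤ 2 * (√β * √s - β) :=
    calc β * log (s / β) = 2 * (√β ^ 2 * log (√s / √β)) := by
          have hsq : s / β = (√s / √β) ^ 2 := by rw [div_pow, sq_sqrt hs.le, sq_sqrt hβ.le]
          rw [hsq, log_pow, sq_sqrt hβ.le]
          push_cast
          ring
      _ ≤ 2 * (√β ^ 2 * (√s / √β - 1)) := by
          gcongr
          exact log_le_sub_one_of_pos (div_pos (sqrt_pos.2 hs) hβ')
      _ = 2 * (√β * √s - β) := by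
          field_simp
          linear_combination -sq_sqrt hβ.le
  unfold volterra
  nlinarith [sq_sqrt hs.le, sq_sqrt hβ.le]

lemma volterra_nonneg (hβ : 0 < β) (hs : 0 < s) : 0 ≤ volterra β s :=
  (sq_nonneg _).trans (sq_sqrt_sub_sqrt_le_volterra hβ hs)

lemma volterra_le_sq_div (hβ : 0 < β) (hs : 0 < s) : volterra β s ≤ (s - β) ^ 2 / s := by
  have hlog : 1 - β / s ≤ log (s / β) := by
    simpa only [inv_div] using one_sub_inv_le_log_of_pos (div_pos hs hβ)
  calc volterra β s ≤ s - β - β * (1 - β / s) := by unfold volterra; gcongr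
    _ = (s - β) ^ 2 / s := by field_simp

lemma exists_abs_sub_lt_of_volterra_lt (hβ : 0 < β) {ε : ℝ} (hε : 0 < ε) :
    ∃ η > 0, ∀ s, 0 < s → volterra β s < η → |s - β| < ε := by
  obtain ⟨r, hr, hsq⟩ :=
    Metric.continuousAt_iff.1 ((continuous_pow 2).continuousAt (x := √β)) ε hε
  refine ⟨r ^ 2, by positivity, fun s hs hV ↦ ?_⟩
  have hroot : dist √s √β < r := by
    rw [Real.dist_eq]
    exact abs_lt_of_sq_lt_sq ((sq_sqrt_sub_sqrt_le_volterra hβ hs).trans_lt hV) hr.le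
  simpa [Real.dist_eq, sq_sqrt, hs.le, hβ.le] using hsq hroot

lemma mul_volterra_le {a k : ℝ} (hβ : 0 < β) (hs : β / 2 ≤ s) (hk : 0 ≤ k) (hka : 2 * k ≤ a * β) :
    k * volterra β s ≤ a * (s - β) ^ 2 :=
  calc k * volterra β s ≤ k * ((s - β) ^ 2 / s) :=
        mul_le_mul_of_nonneg_left (volterra_le_sq_div hβ (by linarith)) hk
    _ ≤ k * ((s - β) ^ 2 / (β / 2)) := by gcongr
    _ = 2 * k * (s - β) ^ 2 / β := by field_simp
    _ ≤ a * (s - β) ^ 2 := by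
        rw [div_le_iff₀ hβ]
        nlinarith [mul_le_mul_of_nonneg_right hka (sq_nonneg (s - β))]

end Volterra

lemma dist_triple_lt_iff {p q : ℝ × ℝ × ℝ} {r : ℝ} :
    dist p q < r ↔ |p.1 - q.1| < r ∧ |p.2.1 - q.2.1| < r ∧ |p.2.2 - q.2.2| < r := by
  simp only [Prod.dist_eq, Real.dist_eq, max_lt_iff]

def posOctant : Set (ℝ × ℝ × ℝ) := {p | 0 < p.1 ∧ 0 < p.2.1 ∧ 0 < p.2.2}

noncomputable def lyapunov (d e : ℝ) (β p : ℝ × ℝ × ℝ) : ℝ :=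
  d * volterra β.1 p.1 + e * volterra β.2.1 p.2.1 + volterra β.2.2 p.2.2

section Lyapunov

variable {d e : ℝ} {β p : ℝ × ℝ × ℝ}

lemma lyapunov_self : lyapunov d e β β = 0 := by
  simp [lyapunov, volterra_self]

lemma lyapunov_nonneg (hd : 0 ≤ d) (he : 0 ≤ e) (hβ : β ∈ posOctant) (hp : p ∈ posOctant) :
    0 ≤ lyapunov d e β p := by
  have := volterra_nonneg hβ.1 hp.1
  have := volterra_nonneg hβ.2.1 hp.2.1
  have := volterra_nonneg hβ.2.2 hp.2.2
  unfold lyapunov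
  positivity

lemma continuousAt_lyapunov (hβ : β ∈ posOctant) : ContinuousAt (lyapunov d e β) β := by
  unfold lyapunov volterra
  fun_prop (disch := simp [hβ.1.ne', hβ.2.1.ne', hβ.2.2.ne'])

lemma exists_dist_lt_of_lyapunov_lt (hd : 0 < d) (he : 0 < e) (hβ : β ∈ posOctant) {ε : ℝ}
    (hε : 0 < ε) : ∃ η > 0, ∀ p ∈ posOctant, lyapunov d e β p < η → dist p β < ε := by
  obtain ⟨η₁, hη₁, h₁⟩ := exists_abs_sub_lt_of_volterra_lt hβ.1 hε
  obtain ⟨η₂, hη₂, h₂⟩ := exists_abs_sub_lt_of_volterra_lt hβ.2.1 hε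
  obtain ⟨η₃, hη₃, h₃⟩ := exists_abs_sub_lt_of_volterra_lt hβ.2.2 hε
  refine ⟨min (d * η₁) (min (e * η₂) η₃), by positivity, fun p hp hV ↦ ?_⟩
  have v₁ := volterra_nonneg hβ.1 hp.1
  have v₂ := volterra_nonneg hβ.2.1 hp.2.1
  have v₃ := volterra_nonneg hβ.2.2 hp.2.2
  simp only [lyapunov, lt_min_iff] at hV
  refine dist_triple_lt_iff.2 ⟨h₁ _ hp.1 ?_, h₂ _ hp.2.1 ?_, h₃ _ hp.2.2 ?_⟩
  · exact lt_of_mul_lt_mul_left (by nlinarith) hd.le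
  · exact lt_of_mul_lt_mul_left (by nlinarith) he.le
  · nlinarith

lemma mul_lyapunov_le_of_dist_lt {a b c : ℝ} (ha : 0 ≤ a) (hb : 0 ≤ b) (hc : 0 ≤ c)
    (hd : 0 ≤ d) (he : 0 ≤ e) (hβ : β ∈ posOctant)
    (hp : dist p β < min β.1 (min β.2.1 β.2.2) / 2) :
    min (a * β.1) (min (b * β.2.1) (c * β.2.2)) / 2 * lyapunov d e β p ≤
      a * d * (p.1 - β.1) ^ 2 + b * e * (p.2.1 - β.2.1) ^ 2 + c * (p.2.2 - β.2.2) ^ 2 := by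
  obtain ⟨h₁, h₂, h₃⟩ := dist_triple_lt_iff.1 hp
  obtain ⟨hβ₁, hβ₂, hβ₃⟩ := hβ
  set κ := min (a * β.1) (min (b * β.2.1) (c * β.2.2)) / 2 with hκ_def
  have hκ : 0 ≤ κ := by positivity
  have hm := min_le_left β.1 (min β.2.1 β.2.2)
  have hm' := min_le_right β.1 (min β.2.1 β.2.2)
  have hk := min_le_left (a * β.1) (min (b * β.2.1) (c * β.2.2))
  have hk' := min_le_right (a * β.1) (min (b * β.2.1) (c * β.2.2))
  have k₁ : κ * volterra β.1 p.1 ≤ a * (p.1 - β.1) ^ 2 :=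
    mul_volterra_le hβ₁ (by linarith [neg_abs_le (p.1 - β.1)]) hκ (by linarith)
  have k₂ : κ * volterra β.2.1 p.2.1 ≤ b * (p.2.1 - β.2.1) ^ 2 :=
    mul_volterra_le hβ₂ (by linarith [neg_abs_le (p.2.1 - β.2.1), min_le_left β.2.1 β.2.2]) hκ
      (by linarith [min_le_left (b * β.2.1) (c * β.2.2)])
  have k₃ : κ * volterra β.2.2 p.2.2 ≤ c * (p.2.2 - β.2.2) ^ 2 :=
    mul_volterra_le hβ₃ (by linarith [neg_abs_le (p.2.2 - β.2.2), min_le_right β.2.1 β.2.2]) hκ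
      (by linarith [min_le_right (b * β.2.1) (c * β.2.2)])
  unfold lyapunov
  nlinarith [mul_le_mul_of_nonneg_left k₁ hd, mul_le_mul_of_nonneg_left k₂ he]

end Lyapunov

lemma HasDerivAt.volterra_comp {β t g : ℝ} {u : ℝ → ℝ} (hβ : β ≠ 0) (hu : HasDerivAt u (u t * g) t)
    (hut : 0 < u t) : HasDerivAt (fun t ↦ volterra β (u t)) ((u t - β) * g) t := by
  have hlog := ((hu.div_const β).log (div_ne_zero hut.ne' hβ)).const_mul β
  exact ((hu.sub_const β).sub hlog).congr_deriv (by field_simp)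

lemma antitoneOn_Ici_of_hasDerivAt_nonpos {f f' : ℝ → ℝ} {t₀ : ℝ}
    (hf : ∀ t ≥ t₀, HasDerivAt f (f' t) t) (hf' : ∀ t ≥ t₀, f' t ≤ 0) :
    AntitoneOn f (Ici t₀) := by
  refine antitoneOn_of_hasDerivWithinAt_nonpos (f' := f') (convex_Ici t₀)
    (fun t ht ↦ (hf t ht).continuousAt.continuousWithinAt) (fun t ht ↦ ?_) (fun t ht ↦ ?_)
  all_goals rw [interior_Ici] at ht
  · exact (hf t ht.le).hasDerivWithinAt
  · exact hf' t ht.le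

lemma tendsto_zero_of_hasDerivAt_le_neg_mul {f f' : ℝ → ℝ} {κ : ℝ} (hκ : 0 < κ)
    (hf : ∀ t ≥ 0, HasDerivAt f (f' t) t) (hf' : ∀ t ≥ 0, f' t ≤ -(κ * f t))
    (hf₀ : ∀ t ≥ 0, 0 ≤ f t) : Tendsto f atTop (𝓝 0) := by
  have hdecay : ∀ t ≥ 0, f t * exp (κ * t) ≤ f 0 := by
    have hanti : AntitoneOn (fun t ↦ f t * exp (κ * t)) (Ici 0) := by
      refine antitoneOn_Ici_of_hasDerivAt_nonpos (f' := fun t ↦ (f' t + κ * f t) * exp (κ * t))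
        (fun t ht ↦ ?_) (fun t ht ↦ ?_)
      · have hexp : HasDerivAt (fun t ↦ exp (κ * t)) (exp (κ * t) * κ) t := by
          simpa using ((hasDerivAt_id t).const_mul κ).exp
        exact ((hf t ht).mul hexp).congr_deriv (by ring)
      · exact mul_nonpos_of_nonpos_of_nonneg (by linarith [hf' t ht]) (exp_pos _).le
    simpa using fun t (ht : 0 ≤ t) ↦ hanti self_mem_Ici ht ht
  have hbound : Tendsto (fun t ↦ f 0 * exp (-(κ * t))) atTop (𝓝 0) := by
    simpa using (tendsto_exp_neg_atTop_nhds_zero.comp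
      (tendsto_id.const_mul_atTop hκ)).const_mul (f 0)
  refine squeeze_zero' (eventually_atTop.2 ⟨0, hf₀⟩) (eventually_atTop.2 ⟨0, fun t ht ↦ ?_⟩) hbound
  rw [exp_neg, ← div_eq_mul_inv, le_div_iff₀ (exp_pos _)]
  exact hdecay t ht

def IsPosSolution (a b c d e : ℝ) (u₁ u₂ u₃ : ℝ → ℝ) : Prop :=
  (∀ t ≥ (0 : ℝ), 0 < u₁ t ∧ 0 < u₂ t ∧ 0 < u₃ t) ∧
  (∀ t ≥ (0 : ℝ),
    HasDerivAt u₁ (a * u₁ t * (1 - u₁ t) - u₁ t * u₃ t) t ∧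
    HasDerivAt u₂ (b * u₂ t * (1 - u₂ t) - u₂ t * u₃ t) t ∧
    HasDerivAt u₃ (-(c * (u₃ t) ^ 2) + (d * u₁ t + e * u₂ t) * u₃ t) t)

structure IsPosEquilibrium (a b c d e : ℝ) (β : ℝ × ℝ × ℝ) : Prop where
  mem_posOctant : β ∈ posOctant
  eq₁ : a * (1 - β.1) = β.2.2
  eq₂ : b * (1 - β.2.1) = β.2.2
  eq₃ : c * β.2.2 = d * β.1 + e * β.2.1

lemma isPosEquilibrium_of_max_lt {a b c d e : ℝ} (ha : 0 < a) (hb : 0 < b) (hc : 0 < c)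
    (hd : 0 < d) (he : 0 < e) (h : max (e * (b - a)) (d * (a - b)) < a * b * c) :
    IsPosEquilibrium a b c d e
      ((a * b * c + a * e - b * e) / (a * b * c + b * d + a * e),
        (a * b * c + b * d - a * d) / (a * b * c + b * d + a * e),
        a * b * (d + e) / (a * b * c + b * d + a * e)) := by
  obtain ⟨h₁, h₂⟩ := max_lt_iff.1 h
  have hD : 0 < a * b * c + b * d + a * e := by positivity
  refine ⟨⟨div_pos (by linarith) hD, div_pos (by linarith) hD, by positivity⟩, ?_, ?_, ?_⟩ <;>
    · field_simp
      ring

section System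

variable {a b c d e : ℝ} {β : ℝ × ℝ × ℝ} {u₁ u₂ u₃ : ℝ → ℝ}

lemma IsPosSolution.hasDerivAt_lyapunov (hu : IsPosSolution a b c d e u₁ u₂ u₃)
    (hβ : IsPosEquilibrium a b c d e β) {t : ℝ} (ht : 0 ≤ t) :
    HasDerivAt (fun t ↦ lyapunov d e β (u₁ t, u₂ t, u₃ t))
      (-(a * d * (u₁ t - β.1) ^ 2 + b * e * (u₂ t - β.2.1) ^ 2 + c * (u₃ t - β.2.2) ^ 2)) t := by
  obtain ⟨hβ₁, hβ₂, hβ₃⟩ := hβ.mem_posOctant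
  obtain ⟨hu₁, hu₂, hu₃⟩ := hu.1 t ht
  obtain ⟨h₁, h₂, h₃⟩ := hu.2 t ht
  have v₁ := (h₁.congr_deriv (by ring : _ = u₁ t * (a * (1 - u₁ t) - u₃ t))).volterra_comp
    hβ₁.ne' hu₁
  have v₂ := (h₂.congr_deriv (by ring : _ = u₂ t * (b * (1 - u₂ t) - u₃ t))).volterra_comp
    hβ₂.ne' hu₂
  have v₃ :=
    (h₃.congr_deriv (by ring : _ = u₃ t * (-(c * u₃ t) + d * u₁ t + e * u₂ t))).volterra_comp
      hβ₃.ne' hu₃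
  refine (((v₁.const_mul d).add (v₂.const_mul e)).add v₃).congr_deriv ?_
  linear_combination d * (u₁ t - β.1) * hβ.eq₁ + e * (u₂ t - β.2.1) * hβ.eq₂ -
    (u₃ t - β.2.2) * hβ.eq₃

lemma IsPosSolution.antitoneOn_lyapunov (ha : 0 ≤ a) (hb : 0 ≤ b) (hc : 0 ≤ c) (hd : 0 ≤ d)
    (he : 0 ≤ e) (hu : IsPosSolution a b c d e u₁ u₂ u₃)
    (hβ : IsPosEquilibrium a b c d e β) :
    AntitoneOn (fun t ↦ lyapunov d e β (u₁ t, u₂ t, u₃ t)) (Ici 0) :=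
  antitoneOn_Ici_of_hasDerivAt_nonpos (fun t ht ↦ hu.hasDerivAt_lyapunov hβ ht)
    (fun t _ ↦ by simp only [neg_nonpos]; positivity)

lemma IsPosEquilibrium.exists_forall_dist_lt (hβ : IsPosEquilibrium a b c d e β) (ha : 0 ≤ a)
    (hb : 0 ≤ b) (hc : 0 ≤ c) (hd : 0 < d) (he : 0 < e) {ε : ℝ} (hε : 0 < ε) :
    ∃ δ > 0, ∀ u₁ u₂ u₃, IsPosSolution a b c d e u₁ u₂ u₃ →
      dist (u₁ 0, u₂ 0, u₃ 0) β < δ → ∀ t ≥ 0, dist (u₁ t, u₂ t, u₃ t) β < ε := by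
  obtain ⟨η, hη, hV⟩ := exists_dist_lt_of_lyapunov_lt hd he hβ.mem_posOctant hε
  obtain ⟨δ, hδ, hV₀⟩ :=
    Metric.continuousAt_iff.1 (continuousAt_lyapunov (d := d) (e := e) hβ.mem_posOctant) η hη
  refine ⟨δ, hδ, fun u₁ u₂ u₃ hu h₀ t ht ↦ hV _ (hu.1 t ht) ?_⟩
  calc lyapunov d e β (u₁ t, u₂ t, u₃ t) ≤ lyapunov d e β (u₁ 0, u₂ 0, u₃ 0) :=
        hu.antitoneOn_lyapunov ha hb hc hd.le he.le hβ self_mem_Ici ht ht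
    _ < η := by
        simpa [lyapunov_self, Real.dist_eq] using (le_abs_self _).trans_lt (hV₀ h₀)

lemma IsPosEquilibrium.exists_tendsto (hβ : IsPosEquilibrium a b c d e β) (ha : 0 < a)
    (hb : 0 < b) (hc : 0 < c) (hd : 0 < d) (he : 0 < e) :
    ∃ δ > 0, ∀ u₁ u₂ u₃, IsPosSolution a b c d e u₁ u₂ u₃ →
      dist (u₁ 0, u₂ 0, u₃ 0) β < δ → Tendsto (fun t ↦ (u₁ t, u₂ t, u₃ t)) atTop (𝓝 β) := by
  obtain ⟨hβ₁, hβ₂, hβ₃⟩ := hβ.mem_posOctant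
  obtain ⟨δ, hδ, hnear⟩ := hβ.exists_forall_dist_lt ha.le hb.le hc.le hd he
    (ε := min β.1 (min β.2.1 β.2.2) / 2) (by positivity)
  refine ⟨δ, hδ, fun u₁ u₂ u₃ hu h₀ ↦ ?_⟩
  -- Stability keeps the orbit where `u ≥ ū / 2`, and there `V' ≤ -κ V`.
  have hV : Tendsto (fun t ↦ lyapunov d e β (u₁ t, u₂ t, u₃ t)) atTop (𝓝 0) :=
    tendsto_zero_of_hasDerivAt_le_neg_mul (κ := min (a * β.1) (min (b * β.2.1) (c * β.2.2)) / 2)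
      (by positivity) (fun t ht ↦ hu.hasDerivAt_lyapunov hβ ht)
      (fun t ht ↦ neg_le_neg (mul_lyapunov_le_of_dist_lt ha.le hb.le hc.le hd.le he.le
        hβ.mem_posOctant (hnear u₁ u₂ u₃ hu h₀ t ht)))
      (fun t ht ↦ lyapunov_nonneg hd.le he.le hβ.mem_posOctant (hu.1 t ht))
  refine Metric.tendsto_atTop.2 fun ε hε ↦ ?_
  obtain ⟨η, hη, hdist⟩ := exists_dist_lt_of_lyapunov_lt hd he hβ.mem_posOctant hε
  obtain ⟨T, hT⟩ :=
    eventually_atTop.1 ((hV.eventually (gt_mem_nhds hη)).and (eventually_ge_atTop 0))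
  exact ⟨T, fun t ht ↦ hdist _ (hu.1 t (hT t ht).2) (hT t ht).1⟩

end System

/-- The positive equilibrium of the kinetic two-prey one-predator system is
Lyapunov stable, indeed asymptotically stable, on the open positive octant. -/
theorem stmt7 (a b c d e : ℝ) (ha : 0 < a) (hb : 0 < b) (hc : 0 < c)
    (hd : 0 < d) (he : 0 < e)
    (h : a * b * c > max (e * (b - a)) (d * (a - b))) :
    let b1 := (a * b * c + a * e - b * e) / (a * b * c + b * d + a * e)
    let b2 := (a * b * c + b * d - a * d) / (a * b * c + b * d + a * e)
    let b3 := a * b * (d + e) / (a * b * c + b * d + a * e)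
    -- Lyapunov stability
    (∀ ε > 0, ∃ δ > 0, ∀ u1 u2 u3 : ℝ → ℝ,
      (∀ t ≥ (0 : ℝ), 0 < u1 t ∧ 0 < u2 t ∧ 0 < u3 t) →
      (∀ t ≥ (0 : ℝ),
        HasDerivAt u1 (a * u1 t * (1 - u1 t) - u1 t * u3 t) t ∧
        HasDerivAt u2 (b * u2 t * (1 - u2 t) - u2 t * u3 t) t ∧
        HasDerivAt u3 (-(c * (u3 t) ^ 2) + (d * u1 t + e * u2 t) * u3 t) t) →
      |u1 0 - b1| < δ → |u2 0 - b2| < δ → |u3 0 - b3| < δ →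
      ∀ t ≥ (0 : ℝ), |u1 t - b1| < ε ∧ |u2 t - b2| < ε ∧ |u3 t - b3| < ε) ∧
    -- local attraction
    (∃ δ₀ > (0 : ℝ), ∀ u1 u2 u3 : ℝ → ℝ,
      (∀ t ≥ (0 : ℝ), 0 < u1 t ∧ 0 < u2 t ∧ 0 < u3 t) →
      (∀ t ≥ (0 : ℝ),
        HasDerivAt u1 (a * u1 t * (1 - u1 t) - u1 t * u3 t) t ∧
        HasDerivAt u2 (b * u2 t * (1 - u2 t) - u2 t * u3 t) t ∧
        HasDerivAt u3 (-(c * (u3 t) ^ 2) + (d * u1 t + e * u2 t) * u3 t) t) →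
      |u1 0 - b1| < δ₀ → |u2 0 - b2| < δ₀ → |u3 0 - b3| < δ₀ →
      Filter.Tendsto u1 Filter.atTop (nhds b1) ∧
      Filter.Tendsto u2 Filter.atTop (nhds b2) ∧
      Filter.Tendsto u3 Filter.atTop (nhds b3)) := by
  intro b1 b2 b3
  have hβ : IsPosEquilibrium a b c d e (b1, b2, b3) := isPosEquilibrium_of_max_lt ha hb hc hd he h
  refine ⟨fun ε hε ↦ ?_, ?_⟩
  · obtain ⟨δ, hδ, hstable⟩ := hβ.exists_forall_dist_lt ha.le hb.le hc.le hd he hε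
    refine ⟨δ, hδ, fun u1 u2 u3 hpos hode h1 h2 h3 t ht ↦ ?_⟩
    exact dist_triple_lt_iff.1
      (hstable u1 u2 u3 ⟨hpos, hode⟩ (dist_triple_lt_iff.2 ⟨h1, h2, h3⟩) t ht)
  · obtain ⟨δ₀, hδ₀, hattract⟩ := hβ.exists_tendsto ha hb hc hd he
    refine ⟨δ₀, hδ₀, fun u1 u2 u3 hpos hode h1 h2 h3 ↦ ?_⟩
    have hu := hattract u1 u2 u3 ⟨hpos, hode⟩ (dist_triple_lt_iff.2 ⟨h1, h2, h3⟩)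
    exact ⟨hu.fst_nhds, hu.snd_nhds.fst_nhds, hu.snd_nhds.snd_nhds⟩
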